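/- For T > 0 and z, w ∈ Δ = {z ∈ ℂ : |arg z| < π/4}, one has ∫₀ᵀ (conjugate of ∂ₓK(w, T-t)) · ∂ₓK(z, T-t) dt = K^q(z,w;T), where ∂ₓK(z,s) = -z/(4√π s^{3/2}) e^{-z²/(4s)} and K^q(z,w;T) = (1/(4π)) e^{-z²/(4T)} e^{-w̄²/(4T)} (4 z w̄/(z² + w̄²)² + z w̄/(T(z² + w̄²))). -/

import Mathlib

open Complex MeasureTheory

/-- `∂ₓK(z,s) = -z/(4√π s^{3/2}) e^{-z²/(4s)}`. -/
noncomputable def dxK (z : ℂ) (t : ℝ) : ℂ :=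
  -z / (4 * Real.sqrt Real.pi * (t ^ ((3:ℝ)/2) : ℝ)) * Complex.exp (-z ^ 2 / (4 * (t : ℂ)))

/-!
After the substitution `s = T - t` the integrand is `z w̄ / (16π) · s⁻³ e^{-b/s}` with
`b = (z² + w̄²)/4`, and `Re b > 0` because `z²` and `w̄²` lie in the right half-plane.
The function `(1/(b s) + 1/b²) e^{-b/s}` is an antiderivative of `s⁻³ e^{-b/s}` which tends
to `0` as `s → 0⁺`, so the integral is its value at `s = T`.
-/

open Filter Topology Set

theorem re_sq_pos_of_abs_arg_lt {z : ℂ} (hz0 : z ≠ 0) (hz : |arg z| < Real.pi / 4) :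
    0 < (z ^ 2).re := by
  have hcos : 0 < Real.cos (2 * arg z) := by
    apply Real.cos_pos_of_mem_Ioo
    constructor <;> linarith [abs_lt.mp hz]
  have hre : (z ^ 2).re = ‖z‖ ^ 2 * Real.cos (2 * arg z) := by
    rw [sq, mul_re, ← norm_mul_cos_arg, ← norm_mul_sin_arg, Real.cos_two_mul']
    ring
  rw [hre]
  have := norm_pos_iff.mpr hz0
  positivity

theorem tendsto_inv_pow_mul_cexp_neg_mul_inv {b : ℂ} (hb : 0 < b.re) (n : ℕ) :
    Tendsto (fun s : ℝ => (s : ℂ)⁻¹ ^ n * exp (-b * (s : ℂ)⁻¹)) (𝓝[>] 0) (𝓝 0) := by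
  have hreal : Tendsto (fun x : ℝ => x ^ (n : ℝ) * Real.exp (-b.re * x)) atTop (𝓝 0) :=
    tendsto_rpow_mul_exp_neg_mul_atTop_nhds_zero n b.re hb
  rw [tendsto_zero_iff_norm_tendsto_zero]
  refine (hreal.comp tendsto_inv_nhdsGT_zero).congr' ?_
  filter_upwards [self_mem_nhdsWithin] with s hs
  simp [norm_exp, ← ofReal_inv, abs_of_pos (mem_Ioi.mp hs)]

theorem continuousOn_inv_pow_mul_cexp_neg_mul_inv {b : ℂ} (hb : 0 < b.re) {n : ℕ}
    (hn : n ≠ 0) :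
    ContinuousOn (fun s : ℝ => (s : ℂ)⁻¹ ^ n * exp (-b * (s : ℂ)⁻¹)) (Ici 0) := by
  intro x hx
  rcases (mem_Ici.mp hx).eq_or_lt with rfl | hpos
  -- the value at `0` is `0` only because `(0 : ℂ)⁻¹ = 0`
  · rw [← continuousWithinAt_Ioi_iff_Ici, ContinuousWithinAt]
    simpa [hn] using tendsto_inv_pow_mul_cexp_neg_mul_inv hb n
  · have hx0 : (x : ℂ) ≠ 0 := ofReal_ne_zero.mpr hpos.ne'
    have hinv : ContinuousAt (fun s : ℝ => (s : ℂ)⁻¹) x :=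
      continuous_ofReal.continuousAt.inv₀ hx0
    exact ((hinv.pow n).mul (continuousAt_const.mul hinv).cexp).continuousWithinAt

theorem hasDerivAt_inv_mul_add_inv_sq_mul_cexp_neg_mul_inv {b : ℂ} (hb : b ≠ 0) {s : ℝ}
    (hs : s ≠ 0) :
    HasDerivAt (fun s : ℝ => (b⁻¹ * (s : ℂ)⁻¹ + b⁻¹ ^ 2) * exp (-b * (s : ℂ)⁻¹))
      ((s : ℂ)⁻¹ ^ 3 * exp (-b * (s : ℂ)⁻¹)) s := by
  have hs0 : (s : ℂ) ≠ 0 := ofReal_ne_zero.mpr hs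
  have hinv : HasDerivAt (fun t : ℝ => (t : ℂ)⁻¹) (-((s : ℂ) ^ 2)⁻¹) s :=
    (hasDerivAt_inv hs0).comp_ofReal
  refine (((hinv.const_mul b⁻¹).add_const (b⁻¹ ^ 2)).mul
    (hinv.const_mul (-b)).cexp).congr_deriv ?_
  field_simp
  ring

theorem integral_inv_pow_three_mul_cexp_neg_mul_inv {b : ℂ} (hb : 0 < b.re) {T : ℝ}
    (hT : 0 < T) :
    ∫ s in (0 : ℝ)..T, (s : ℂ)⁻¹ ^ 3 * exp (-b * (s : ℂ)⁻¹)
      = (b⁻¹ * (T : ℂ)⁻¹ + b⁻¹ ^ 2) * exp (-b * (T : ℂ)⁻¹) := by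
  have hb0 : b ≠ 0 := fun h => by simp [h] at hb
  have hint :
      IntervalIntegrable (fun s : ℝ => (s : ℂ)⁻¹ ^ 3 * exp (-b * (s : ℂ)⁻¹)) volume 0 T :=
    ((continuousOn_inv_pow_mul_cexp_neg_mul_inv hb three_ne_zero).mono
      Icc_subset_Ici_self).intervalIntegrable_of_Icc hT.le
  have hzero : Tendsto (fun s : ℝ => (b⁻¹ * (s : ℂ)⁻¹ + b⁻¹ ^ 2) * exp (-b * (s : ℂ)⁻¹))
      (𝓝[>] 0) (𝓝 0) := by
    have := ((tendsto_inv_pow_mul_cexp_neg_mul_inv hb 1).const_mul b⁻¹).add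
      ((tendsto_inv_pow_mul_cexp_neg_mul_inv hb 0).const_mul (b⁻¹ ^ 2))
    simp only [pow_one, pow_zero, one_mul, mul_zero, add_zero] at this
    refine this.congr fun s => ?_
    ring
  have hderiv := fun s (hs : s ≠ 0) => hasDerivAt_inv_mul_add_inv_sq_mul_cexp_neg_mul_inv hb0 hs
  have hT' := (hderiv T hT.ne').continuousAt.tendsto.mono_left (nhdsWithin_le_nhds (s := Iio T))
  rw [intervalIntegral.integral_eq_sub_of_hasDerivAt_of_tendsto hT
    (fun s hs => hderiv s hs.1.ne') hint hzero hT', sub_zero]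

theorem conj_dxK (w : ℂ) (s : ℝ) : starRingEnd ℂ (dxK w s) = dxK (starRingEnd ℂ w) s := by
  simp [dxK, ← exp_conj, map_div₀, map_ofNat]

theorem dxK_mul_dxK (u z : ℂ) {s : ℝ} (hs : 0 < s) :
    dxK u s * dxK z s
      = u * z / (16 * Real.pi) * ((s : ℂ)⁻¹ ^ 3 * exp (-((u ^ 2 + z ^ 2) / 4) * (s : ℂ)⁻¹)) := by
  have hr : (((s ^ ((3 : ℝ) / 2) : ℝ)) : ℂ) ^ 2 = (s : ℂ) ^ 3 := by
    rw [← ofReal_pow, ← Real.rpow_natCast, ← Real.rpow_mul hs.le]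
    norm_num
  have hq : ((Real.sqrt Real.pi : ℝ) : ℂ) ^ 2 = Real.pi := by
    rw [← ofReal_pow, Real.sq_sqrt Real.pi_pos.le]
  have hs0 : (s : ℂ) ≠ 0 := ofReal_ne_zero.mpr hs.ne'
  have hr0 : (((s ^ ((3 : ℝ) / 2) : ℝ)) : ℂ) ≠ 0 :=
    ofReal_ne_zero.mpr (Real.rpow_pos_of_pos hs _).ne'
  have hq0 : ((Real.sqrt Real.pi : ℝ) : ℂ) ≠ 0 :=
    ofReal_ne_zero.mpr (Real.sqrt_pos.mpr Real.pi_pos).ne'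
  have hexp : exp (-u ^ 2 / (4 * s)) * exp (-z ^ 2 / (4 * s))
      = exp (-((u ^ 2 + z ^ 2) / 4) * (s : ℂ)⁻¹) := by
    rw [← exp_add]
    congr 1
    field_simp
    ring
  rw [dxK, dxK, mul_mul_mul_comm, hexp, ← hq, inv_pow, ← hr]
  field_simp
  ring

/-- For `T > 0` and `z, w` in the sector `Δ`,
`∫₀ᵀ (conj ∂ₓK(w,T-t)) ∂ₓK(z,T-t) dt = K^q(z,w;T)` where
`K^q(z,w;T) = (1/(4π)) e^{-z²/(4T)} e^{-w̄²/(4T)} (4zw̄/(z²+w̄²)² + zw̄/(T(z²+w̄²)))`. -/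
theorem Kq_integral_formula (T : ℝ) (hT : 0 < T) (z w : ℂ)
    (hz : |Complex.arg z| < Real.pi / 4) (hw : |Complex.arg w| < Real.pi / 4) :
    ∫ t in Set.Ioo (0:ℝ) T, (starRingEnd ℂ) (dxK w (T - t)) * dxK z (T - t)
      = (1 / (4 * (Real.pi : ℂ))) *
          Complex.exp (-z ^ 2 / (4 * (T : ℂ))) *
          Complex.exp (-((starRingEnd ℂ) w) ^ 2 / (4 * (T : ℂ))) *
          (4 * z * (starRingEnd ℂ) w / (z ^ 2 + ((starRingEnd ℂ) w) ^ 2) ^ 2 +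
            z * (starRingEnd ℂ) w / ((T : ℂ) * (z ^ 2 + ((starRingEnd ℂ) w) ^ 2))) := by
  rcases eq_or_ne z 0 with rfl | hz0
  · simp [dxK]
  rcases eq_or_ne w 0 with rfl | hw0
  · simp [dxK]
  set u := starRingEnd ℂ w
  set b := (u ^ 2 + z ^ 2) / 4 with hb_def
  have hb : 0 < b.re := by
    have hu : 0 < (u ^ 2).re := by
      simpa [u, ← map_pow] using re_sq_pos_of_abs_arg_lt hw0 hw
    have := re_sq_pos_of_abs_arg_lt hz0 hz
    simp only [hb_def, div_ofNat_re, add_re]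
    positivity
  have hchange : ∫ t in Ioo (0 : ℝ) T, starRingEnd ℂ (dxK w (T - t)) * dxK z (T - t)
      = ∫ s in (0 : ℝ)..T, dxK u s * dxK z s := by
    rw [← integral_Ioc_eq_integral_Ioo, ← intervalIntegral.integral_of_le hT.le,
      intervalIntegral.integral_comp_sub_left (fun s => starRingEnd ℂ (dxK w s) * dxK z s) T,
      sub_self, sub_zero]
    simp only [conj_dxK, u]
  have hpointwise : ∫ s in (0 : ℝ)..T, dxK u s * dxK z s
      = ∫ s in (0 : ℝ)..T, u * z / (16 * Real.pi) * ((s : ℂ)⁻¹ ^ 3 * exp (-b * (s : ℂ)⁻¹)) :=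
    intervalIntegral.integral_congr_ae (ae_of_all _ fun s hs =>
      dxK_mul_dxK u z (uIoc_of_le hT.le ▸ hs).1)
  have hT0 : (T : ℂ) ≠ 0 := ofReal_ne_zero.mpr hT.ne'
  have hexp : exp (-b * (T : ℂ)⁻¹) = exp (-z ^ 2 / (4 * T)) * exp (-u ^ 2 / (4 * T)) := by
    rw [← exp_add, hb_def]
    congr 1
    field_simp
    ring
  rw [hchange, hpointwise, intervalIntegral.integral_const_mul,
    integral_inv_pow_three_mul_cexp_neg_mul_inv hb hT, hexp,
    show z ^ 2 + u ^ 2 = 4 * b by rw [hb_def]; ring]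
  have hb0 : b ≠ 0 := fun h => by simp [h] at hb
  have hπ : (Real.pi : ℂ) ≠ 0 := ofReal_ne_zero.mpr Real.pi_ne_zero
  field_simp
  ring
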